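/- Let n ≥ 1, let u : ℝ × (Fin n → ℝ) → (Fin n → ℝ) be continuously differentiable, and let g : ℝ × (Fin n → ℝ) → (Fin n → ℝ) be twice continuously differentiable with ∂ₜg(t, x) = u(t, g(t, x)) for all (t,x). Let γ : ℝ → (Fin n → ℝ) be a continuously differentiable closed curve with γ(0) = γ(1). Define the circulation C(t) := ∫₀¹ ⟨u(t, g(t, γ(s))), ∂ₛ[g(t, γ(s))]⟩ ds (Euclidean inner product on ℝⁿ). Then C is differentiable and C'(t) = ∫₀¹ ⟨(∂ₜu + (u·∇)u)(t, g(t, γ(s))), ∂ₛ[g(t, γ(s))]⟩ ds, i.e. the term (∇u)ᵀ·u contributes the exact differential of |u|²/2 around the loop and integrates to zero. -/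

import Mathlib

/-!
Write `X(τ, s) = g(τ, γ s)` for the advected loop, `U = u ∘ X` and `D = ∂ₛX`. Differentiating
`U ⬝ᵥ D` in `τ` gives `(Du/Dt) ⬝ᵥ D + U ⬝ᵥ ∂_τ D`. Because `∂ₜg = u ∘ g`, symmetry of the second
derivative of `g` gives `∂_τ D = ∂ₛU`, so the second term is `∂ₛ(|U|² / 2)` and integrates to zero
over the closed loop. Differentiating under the integral sign only needs joint continuity of the
integrands, which bounds them on compact sets.
-/

open Function intervalIntegral

theorem hasDerivAt_intervalIntegral_of_continuous {E : Type*} [NormedAddCommGroup E]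
    [NormedSpace ℝ E] {F F' : ℝ → ℝ → E} (hF : ∀ τ, Continuous (F τ))
    (hF' : Continuous (uncurry F')) (hderiv : ∀ τ s, HasDerivAt (F · s) (F' τ s) τ)
    (a b t : ℝ) :
    HasDerivAt (fun τ => ∫ s in a..b, F τ s) (∫ s in a..b, F' t s) t := by
  obtain ⟨M, hM⟩ := ((isCompact_closedBall t 1).prod isCompact_uIcc).exists_bound_of_continuousOn
    hF'.continuousOn
  refine (hasDerivAt_integral_of_dominated_loc_of_deriv_le (bound := fun _ => M)
    (Metric.closedBall_mem_nhds t one_pos) (.of_forall fun τ => (hF τ).aestronglyMeasurable)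
    ((hF t).intervalIntegrable a b) (hF'.uncurry_left t).aestronglyMeasurable ?_
    intervalIntegrable_const (.of_forall fun s _ τ _ => hderiv τ s)).2
  exact .of_forall fun s hs τ hτ => hM (τ, s) ⟨hτ, Set.uIoc_subset_uIcc hs⟩

theorem HasDerivAt.dotProduct {ι 𝕜 : Type*} [Fintype ι] [NontriviallyNormedField 𝕜]
    {f g : 𝕜 → ι → 𝕜} {f' g' : ι → 𝕜} {t : 𝕜}
    (hf : HasDerivAt f f' t) (hg : HasDerivAt g g' t) :
    HasDerivAt (fun τ => f τ ⬝ᵥ g τ) (f' ⬝ᵥ g t + f t ⬝ᵥ g') t := by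
  unfold _root_.dotProduct
  rw [← Finset.sum_add_distrib]
  exact .fun_sum fun i _ => (hasDerivAt_pi.1 hf i).mul (hasDerivAt_pi.1 hg i)

theorem ContinuousLinearMap.apply_one_eq_add_sum {ι F : Type*} [Fintype ι] [DecidableEq ι]
    [AddCommGroup F] [Module ℝ F] [TopologicalSpace F]
    (L : ℝ × (ι → ℝ) →L[ℝ] F) (v : ι → ℝ) :
    L (1, v) = L (1, 0) + ∑ j, v j • L (0, Pi.single j 1) := by
  have hsplit : ((1 : ℝ), v) = (1, 0) + (0, v) := by simp
  have hbasis : ((0 : ℝ), v) = ∑ j, v j • ((0 : ℝ), (Pi.single j 1 : ι → ℝ)) := by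
    ext <;> simp [Prod.fst_sum, Prod.snd_sum, Pi.single_apply]
  rw [hsplit, map_add, hbasis, map_sum]
  simp only [map_smul]

section SecondDerivative

variable {E F : Type*} [NormedAddCommGroup E] [NormedSpace ℝ E] [NormedAddCommGroup F]
  [NormedSpace ℝ F] {f : E → F} {c : ℝ → E} {c' : E} {s : ℝ}

theorem hasDerivAt_fderiv_comp_apply (hf : ContDiff ℝ 2 f) (hc : HasDerivAt c c' s) (w : E) :
    HasDerivAt (fun r => fderiv ℝ f (c r) w) (fderiv ℝ (fderiv ℝ f) (c s) c' w) s := by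
  have hf' : Differentiable ℝ (fderiv ℝ f) :=
    (hf.fderiv_right (m := 1) le_rfl).differentiable one_ne_zero
  simpa using ((hf' (c s)).hasFDerivAt.comp_hasDerivAt s hc).clm_apply (hasDerivAt_const s w)

end SecondDerivative

section Flow

variable {E : Type*} [NormedAddCommGroup E] [NormedSpace ℝ E]

/-- `∂ₜu + (u·∇)u` at `p = (t, x)`: the derivative of `u` in the space-time direction `(1, u p)`. -/
noncomputable def materialDeriv (u : ℝ × E → E) (p : ℝ × E) : E :=
  fderiv ℝ u p (1, u p)

noncomputable def loopTangent (g : ℝ × E → E) (γ : ℝ → E) (τ s : ℝ) : E :=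
  fderiv ℝ g (τ, γ s) (0, deriv γ s)

noncomputable def loopMixedDeriv (g : ℝ × E → E) (γ : ℝ → E) (τ s : ℝ) : E :=
  fderiv ℝ (fderiv ℝ g) (τ, γ s) (1, 0) (0, deriv γ s)

variable {u g : ℝ × E → E} {γ : ℝ → E}

theorem hasDerivAt_advectedLoop (hg : Differentiable ℝ g) (hγ : Differentiable ℝ γ) (τ s : ℝ) :
    HasDerivAt (fun r => g (τ, γ r)) (loopTangent g γ τ s) s :=
  (hg _).hasFDerivAt.comp_hasDerivAt s ((hasDerivAt_const s τ).prodMk (hγ s).hasDerivAt)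

theorem fderiv_apply_one_zero_of_flow (hg : Differentiable ℝ g)
    (hflow : ∀ t x, HasDerivAt (fun s => g (s, x)) (u (t, g (t, x))) t) (t : ℝ) (x : E) :
    fderiv ℝ g (t, x) (1, 0) = u (t, g (t, x)) :=
  ((hg _).hasFDerivAt.comp_hasDerivAt t
    ((hasDerivAt_id t).prodMk (hasDerivAt_const t x))).unique (hflow t x)

theorem hasDerivAt_velocity_along_flow (hu : Differentiable ℝ u)
    (hflow : ∀ t x, HasDerivAt (fun s => g (s, x)) (u (t, g (t, x))) t) (t : ℝ) (x : E) :
    HasDerivAt (fun τ => u (τ, g (τ, x))) (materialDeriv u (t, g (t, x))) t :=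
  (hu _).hasFDerivAt.comp_hasDerivAt t ((hasDerivAt_id t).prodMk (hflow t x))

theorem hasDerivAt_loopTangent_time (hg : ContDiff ℝ 2 g) (t s : ℝ) :
    HasDerivAt (fun τ => loopTangent g γ τ s) (loopMixedDeriv g γ t s) t :=
  hasDerivAt_fderiv_comp_apply hg ((hasDerivAt_id t).prodMk (hasDerivAt_const t (γ s))) _

theorem hasDerivAt_velocity_along_loop (hg : ContDiff ℝ 2 g) (hγ : Differentiable ℝ γ)
    (hflow : ∀ t x, HasDerivAt (fun s => g (s, x)) (u (t, g (t, x))) t) (t s : ℝ) :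
    HasDerivAt (fun r => u (t, g (t, γ r))) (loopMixedDeriv g γ t s) s := by
  have hsymm := hg.contDiffAt.isSymmSndFDerivAt (x := (t, γ s)) (by simp)
  simp only [← fderiv_apply_one_zero_of_flow (hg.differentiable two_ne_zero) hflow]
  rw [loopMixedDeriv, hsymm]
  exact hasDerivAt_fderiv_comp_apply hg ((hasDerivAt_const s t).prodMk (hγ s).hasDerivAt) _

theorem continuous_materialDeriv (hu : ContDiff ℝ 1 u) : Continuous (materialDeriv u) :=
  (hu.continuous_fderiv one_ne_zero).clm_apply (continuous_const.prodMk hu.continuous)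

theorem continuous_loopTangent (hg : ContDiff ℝ 1 g) (hγ : ContDiff ℝ 1 γ) :
    Continuous (uncurry (loopTangent g γ)) :=
  ((hg.continuous_fderiv one_ne_zero).comp (continuous_fst.prodMk
    (hγ.continuous.comp continuous_snd))).clm_apply
    (continuous_const.prodMk ((hγ.continuous_deriv le_rfl).comp continuous_snd))

theorem continuous_loopMixedDeriv (hg : ContDiff ℝ 2 g) (hγ : ContDiff ℝ 1 γ) :
    Continuous (uncurry (loopMixedDeriv g γ)) :=
  ((((hg.fderiv_right (m := 1) le_rfl).continuous_fderiv one_ne_zero).comp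
    (continuous_fst.prodMk (hγ.continuous.comp continuous_snd))).clm_apply
    continuous_const).clm_apply
    (continuous_const.prodMk ((hγ.continuous_deriv le_rfl).comp continuous_snd))

end Flow

section Circulation

variable {ι : Type*} [Fintype ι] {u g : ℝ × (ι → ℝ) → ι → ℝ} {γ : ℝ → ι → ℝ}

theorem materialDeriv_apply [DecidableEq ι] {p : ℝ × (ι → ℝ)} (hu : DifferentiableAt ℝ u p)
    (i : ι) :
    materialDeriv u p i = fderiv ℝ (fun q => u q i) p (1, 0)
      + ∑ j, u p j * fderiv ℝ (fun q => u q i) p (0, Pi.single j 1) := by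
  rw [fderiv_apply hu i]
  exact ((ContinuousLinearMap.proj i).comp (fderiv ℝ u p)).apply_one_eq_add_sum (u p)

theorem integral_velocity_dotProduct_loopMixedDeriv_eq_zero (hu : Continuous u)
    (hg : ContDiff ℝ 2 g) (hγ : ContDiff ℝ 1 γ)
    (hflow : ∀ t x, HasDerivAt (fun s => g (s, x)) (u (t, g (t, x))) t)
    (hclosed : γ 0 = γ 1) (t : ℝ) :
    ∫ s in (0 : ℝ)..1, u (t, g (t, γ s)) ⬝ᵥ loopMixedDeriv g γ t s = 0 := by
  have hU := hasDerivAt_velocity_along_loop hg (hγ.differentiable one_ne_zero) hflow t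
  have hkinetic (s : ℝ) : HasDerivAt (fun r => u (t, g (t, γ r)) ⬝ᵥ u (t, g (t, γ r)) / 2)
      (u (t, g (t, γ s)) ⬝ᵥ loopMixedDeriv g γ t s) s := by
    refine (((hU s).dotProduct (hU s)).div_const 2).congr_deriv ?_
    rw [dotProduct_comm (loopMixedDeriv g γ t s)]
    ring
  have hcont : Continuous fun s => u (t, g (t, γ s)) ⬝ᵥ loopMixedDeriv g γ t s :=
    (hu.comp (continuous_const.prodMk (hg.continuous.comp
      (continuous_const.prodMk hγ.continuous)))).dotProduct
      ((continuous_loopMixedDeriv hg hγ).uncurry_left t)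
  rw [integral_eq_sub_of_hasDerivAt (fun s _ => hkinetic s) (hcont.intervalIntegrable 0 1),
    hclosed, sub_self]

theorem hasDerivAt_circulation (hu : ContDiff ℝ 1 u) (hg : ContDiff ℝ 2 g)
    (hγ : ContDiff ℝ 1 γ)
    (hflow : ∀ t x, HasDerivAt (fun s => g (s, x)) (u (t, g (t, x))) t)
    (hclosed : γ 0 = γ 1) (t : ℝ) :
    HasDerivAt (fun τ => ∫ s in (0 : ℝ)..1, u (τ, g (τ, γ s)) ⬝ᵥ loopTangent g γ τ s)
      (∫ s in (0 : ℝ)..1, materialDeriv u (t, g (t, γ s)) ⬝ᵥ loopTangent g γ t s) t := by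
  have hX : Continuous fun p : ℝ × ℝ => (p.1, g (p.1, γ p.2)) :=
    continuous_fst.prodMk (hg.continuous.comp
      (continuous_fst.prodMk (hγ.continuous.comp continuous_snd)))
  have hD := continuous_loopTangent (hg.of_le one_le_two) hγ
  have hcirc : Continuous fun p : ℝ × ℝ =>
      u (p.1, g (p.1, γ p.2)) ⬝ᵥ loopTangent g γ p.1 p.2 :=
    (hu.continuous.comp hX).dotProduct hD
  have hmat : Continuous fun p : ℝ × ℝ =>
      materialDeriv u (p.1, g (p.1, γ p.2)) ⬝ᵥ loopTangent g γ p.1 p.2 :=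
    ((continuous_materialDeriv hu).comp hX).dotProduct hD
  have hkin : Continuous fun p : ℝ × ℝ =>
      u (p.1, g (p.1, γ p.2)) ⬝ᵥ loopMixedDeriv g γ p.1 p.2 :=
    (hu.continuous.comp hX).dotProduct (continuous_loopMixedDeriv hg hγ)
  have hderiv := hasDerivAt_intervalIntegral_of_continuous
    (F := fun τ s => u (τ, g (τ, γ s)) ⬝ᵥ loopTangent g γ τ s)
    (F' := fun τ s => materialDeriv u (τ, g (τ, γ s)) ⬝ᵥ loopTangent g γ τ s
      + u (τ, g (τ, γ s)) ⬝ᵥ loopMixedDeriv g γ τ s)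
    (fun _ => hcirc.comp (continuous_const.prodMk continuous_id)) (hmat.add hkin)
    (fun τ s => (hasDerivAt_velocity_along_flow (hu.differentiable one_ne_zero) hflow τ
      (γ s)).dotProduct (hasDerivAt_loopTangent_time hg τ s)) 0 1 t
  have hslice : Continuous fun s : ℝ => (t, s) := continuous_const.prodMk continuous_id
  have hsplit : ∫ s in (0 : ℝ)..1, (materialDeriv u (t, g (t, γ s)) ⬝ᵥ loopTangent g γ t s
        + u (t, g (t, γ s)) ⬝ᵥ loopMixedDeriv g γ t s)
      = (∫ s in (0 : ℝ)..1, materialDeriv u (t, g (t, γ s)) ⬝ᵥ loopTangent g γ t s)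
        + ∫ s in (0 : ℝ)..1, u (t, g (t, γ s)) ⬝ᵥ loopMixedDeriv g γ t s :=
    integral_add ((hmat.comp hslice).intervalIntegrable 0 1)
      ((hkin.comp hslice).intervalIntegrable 0 1)
  rwa [hsplit,
    integral_velocity_dotProduct_loopMixedDeriv_eq_zero hu.continuous hg hγ hflow hclosed,
    add_zero] at hderiv

end Circulation

theorem circulation_derivative_is_material_derivative_general
    {n : ℕ}
    (u : ℝ × (Fin n → ℝ) → (Fin n → ℝ))
    (g : ℝ × (Fin n → ℝ) → (Fin n → ℝ))
    (γ : ℝ → (Fin n → ℝ))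
    (hu : ContDiff ℝ 1 u) (hg : ContDiff ℝ 2 g) (hγ : ContDiff ℝ 1 γ)
    (hflow : ∀ (t : ℝ) (x : Fin n → ℝ),
      HasDerivAt (fun s => g (s, x)) (u (t, g (t, x))) t)
    (hclosed : γ 0 = γ 1) :
    ∀ t : ℝ,
      HasDerivAt
        (fun τ => ∫ s in (0:ℝ)..1,
          ∑ i, u (τ, g (τ, γ s)) i * deriv (fun r => g (τ, γ r)) s i)
        (∫ s in (0:ℝ)..1,
          ∑ i, (fderiv ℝ (fun q => u q i) (t, g (t, γ s)) (1, 0)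
                + ∑ j, u (t, g (t, γ s)) j *
                    fderiv ℝ (fun q => u q i) (t, g (t, γ s)) (0, Pi.single j 1))
              * deriv (fun r => g (t, γ r)) s i)
        t := by
  intro t
  have htangent (τ s : ℝ) : deriv (fun r => g (τ, γ r)) s = loopTangent g γ τ s :=
    (hasDerivAt_advectedLoop (hg.differentiable two_ne_zero) (hγ.differentiable one_ne_zero)
      τ s).deriv
  have hmaterial (p : ℝ × (Fin n → ℝ)) (i : Fin n) :
      fderiv ℝ (fun q => u q i) p (1, 0)
        + ∑ j, u p j * fderiv ℝ (fun q => u q i) p (0, Pi.single j 1) = materialDeriv u p i :=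
    (materialDeriv_apply (hu.differentiable one_ne_zero p) i).symm
  simp only [htangent, hmaterial]
  exact hasDerivAt_circulation hu hg hγ hflow hclosed t

/-- **Derivative of the circulation around an advected material loop.**
Let `u` be a `C¹` Eulerian velocity with `C²` flow map `g`
(`∂ₜg(t,x) = u(t, g(t,x))`) and let `γ` be a `C¹` closed curve.  Then the
circulation `C(t) = ∫₀¹ ⟨u(t, g(t,γ(s))), ∂ₛ[g(t,γ(s))]⟩ ds` is
differentiable and
`C'(t) = ∫₀¹ ⟨(∂ₜu + (u·∇)u)(t, g(t,γ(s))), ∂ₛ[g(t,γ(s))]⟩ ds`: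
the term `(∇u)ᵀ·u` contributes the exact differential of `|u|²/2` around
the closed loop and integrates to zero. -/
theorem circulation_derivative_is_material_derivative
    {n : ℕ} (hn : 1 ≤ n)
    (u : ℝ × (Fin n → ℝ) → (Fin n → ℝ))
    (g : ℝ × (Fin n → ℝ) → (Fin n → ℝ))
    (γ : ℝ → (Fin n → ℝ))
    (hu : ContDiff ℝ 1 u) (hg : ContDiff ℝ 2 g) (hγ : ContDiff ℝ 1 γ)
    (hflow : ∀ (t : ℝ) (x : Fin n → ℝ),
      HasDerivAt (fun s => g (s, x)) (u (t, g (t, x))) t)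
    (hclosed : γ 0 = γ 1) :
    ∀ t : ℝ,
      HasDerivAt
        (fun τ => ∫ s in (0:ℝ)..1,
          ∑ i, u (τ, g (τ, γ s)) i * deriv (fun r => g (τ, γ r)) s i)
        (∫ s in (0:ℝ)..1,
          ∑ i, (fderiv ℝ (fun q => u q i) (t, g (t, γ s)) (1, 0)
                + ∑ j, u (t, g (t, γ s)) j *
                    fderiv ℝ (fun q => u q i) (t, g (t, γ s)) (0, Pi.single j 1))
              * deriv (fun r => g (t, γ r)) s i)
        t :=
  circulation_derivative_is_material_derivative_general u g γ hu hg hγ hflow hclosed
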